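/- Scaling of the γ coefficients for power-law kernels: suppose the collision kernel has the form B(|g|, ς) = |g|^C Σ(ς) for a constant C ∈ ℝ and a nonnegative measurable function Σ on S², and assume all integrals below converge absolutely. Then for every r > 0, T̄ > 0 and all multi-indices κ, j ∈ ℕ³, γ_κ^{j}(r, T̄) = ((1+r)/(2r))^{3/2} ((1+r)T̄/(2r))^{C/2} γ_κ^{j}(1, 1). -/

import Mathlib

open MeasureTheory Real Function

noncomputable section

/-- `ℝ³` with the Euclidean norm. -/
abbrev E3 : Type := EuclideanSpace ℝ (Fin 3)

/-- The unit sphere `S² ⊆ ℝ³`. -/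
abbrev S2 := Metric.sphere (0 : E3) 1

/-- The surface measure on the unit sphere `S²`. -/
def sphereMeasure : Measure S2 := (volume : Measure E3).toSphere

/-- The Maxwellian `𝓜_{ū,T̄}(v) = (2πT̄)^{-3/2} exp(-|v-ū|²/(2T̄))`. -/
def maxwellian (u : E3) (T : ℝ) (v : E3) : ℝ :=
  (2 * π * T) ^ (-(3 : ℝ) / 2) * Real.exp (-‖v - u‖ ^ 2 / (2 * T))

/-- Partial derivative in the `d`-th coordinate direction. -/
def pd (d : Fin 3) (f : E3 → ℝ) : E3 → ℝ :=
  fun v => fderiv ℝ f v (EuclideanSpace.single d 1)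

/-- The multi-index partial derivative `∂^{|α|}/∂v₁^{α₁}∂v₂^{α₂}∂v₃^{α₃}`. -/
def pdMulti (α : Fin 3 → ℕ) (f : E3 → ℝ) : E3 → ℝ :=
  (pd 0)^[α 0] <| (pd 1)^[α 1] <| (pd 2)^[α 2] f

/-- `|α| = α₁ + α₂ + α₃`. -/
def msum (α : Fin 3 → ℕ) : ℕ := ∑ d, α d

/-- `α! = α₁! α₂! α₃!`. -/
def mfact (α : Fin 3 → ℕ) : ℕ := ∏ d, (α d).factorial

/-- The Hermite polynomial
`H_α^{ū,T̄}(v) = (-1)^{|α|} T̄^{|α|/2} 𝓜_{ū,T̄}(v)⁻¹ ∂^{|α|}𝓜_{ū,T̄}(v)/∂v^α`. -/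
def hermiteH (u : E3) (T : ℝ) (α : Fin 3 → ℕ) (v : E3) : ℝ :=
  (-1 : ℝ) ^ msum α * T ^ ((msum α : ℝ) / 2) * (maxwellian u T v)⁻¹ *
    pdMulti α (maxwellian u T) v

/-- Post-collision velocity
`v' = (mᵢ v + mⱼ v*)/(mᵢ+mⱼ) + (mⱼ/(mᵢ+mⱼ)) |v - v*| ς`. -/
def vPost (mi mj : ℝ) (v vs ς : E3) : E3 :=
  (mi + mj)⁻¹ • (mi • v + mj • vs) + (mj / (mi + mj) * ‖v - vs‖) • ς

/-- Post-collision velocity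
`v'_* = (mᵢ v + mⱼ v*)/(mᵢ+mⱼ) - (mᵢ/(mᵢ+mⱼ)) |v - v*| ς`. -/
def vsPost (mi mj : ℝ) (v vs ς : E3) : E3 :=
  (mi + mj)⁻¹ • (mi • v + mj • vs) - (mi / (mi + mj) * ‖v - vs‖) • ς

/-- The integrand of `γ_κ^j(r, T̄)`. -/
def gammaIntegrand (B : ℝ → S2 → ℝ) (r T : ℝ) (kap j : Fin 3 → ℕ)
    (g : E3) (ς : S2) : ℝ :=
  (hermiteH 0 T j (Real.sqrt (r / (1 + r)) • (‖g‖ • (ς : E3))) -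
      hermiteH 0 T j (Real.sqrt (r / (1 + r)) • g)) *
    hermiteH 0 T kap (Real.sqrt (r / (1 + r)) • g) * B ‖g‖ ς *
    maxwellian 0 T (Real.sqrt (r / (1 + r)) • g)

/-- `γ_κ^j(r, T̄) = ∫_{ℝ³}∫_{S²} [H_j^{0,T̄}(√(r/(1+r))·|g|ς) - H_j^{0,T̄}(√(r/(1+r))·g)]
H_κ^{0,T̄}(√(r/(1+r))·g) B(|g|,ς) 𝓜_{0,T̄}(√(r/(1+r))·g) dς dg`. -/
def gammaCoef (B : ℝ → S2 → ℝ) (r T : ℝ) (kap j : Fin 3 → ℕ) : ℝ :=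
  ∫ g : E3, ∫ ς : S2, gammaIntegrand B r T kap j g ς ∂sphereMeasure

/-! ### Auxiliary lemmas -/

lemma maxwellian_contDiff (u : E3) (T : ℝ) : ContDiff ℝ (⊤ : ℕ∞) (maxwellian u T) := by
  unfold maxwellian
  exact contDiff_const.mul
    ((((contDiff_id.sub contDiff_const).norm_sq (𝕜 := ℝ)).neg.div_const _).exp)

lemma maxwellian_pos (u : E3) {T : ℝ} (hT : 0 < T) (v : E3) : 0 < maxwellian u T v := by
  unfold maxwellian
  positivity

lemma pd_contDiff {f : E3 → ℝ} (hf : ContDiff ℝ (⊤ : ℕ∞) f) (d : Fin 3) :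
    ContDiff ℝ (⊤ : ℕ∞) (pd d f) := by
  unfold pd
  exact (hf.fderiv_right (m := (⊤ : ℕ∞)) (mod_cast le_top)).clm_apply contDiff_const

lemma pd_iter_contDiff {f : E3 → ℝ} (hf : ContDiff ℝ (⊤ : ℕ∞) f) (d : Fin 3) (n : ℕ) :
    ContDiff ℝ (⊤ : ℕ∞) ((pd d)^[n] f) := by
  induction n generalizing f with
  | zero => exact hf
  | succ n ih => rw [Function.iterate_succ_apply]; exact ih (pd_contDiff hf d)

lemma pd_comp_smul {f : E3 → ℝ} (hf : ContDiff ℝ (⊤ : ℕ∞) f) (c : ℝ) (d : Fin 3) :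
    pd d (fun v => f (c • v)) = fun v => c * pd d f (c • v) := by
  funext v
  unfold pd
  have hL : (fun v : E3 => f (c • v)) = f ∘ ⇑(c • ContinuousLinearMap.id ℝ E3) := rfl
  rw [hL, fderiv_comp v (hf.differentiable (by simp) _)
    ((c • ContinuousLinearMap.id ℝ E3).differentiableAt),
    (c • ContinuousLinearMap.id ℝ E3).fderiv]
  simp [smul_eq_mul, ContinuousLinearMap.map_smul]

lemma pd_const_mul {f : E3 → ℝ} (hf : ContDiff ℝ (⊤ : ℕ∞) f) (k : ℝ) (d : Fin 3) :
    pd d (fun v => k * f v) = fun v => k * pd d f v := by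
  funext v
  unfold pd
  rw [fderiv_const_mul (hf.differentiable (by simp) v) k]
  simp

lemma pd_iter_const_mul {f : E3 → ℝ} (hf : ContDiff ℝ (⊤ : ℕ∞) f) (k : ℝ) (d : Fin 3) (n : ℕ) :
    (pd d)^[n] (fun v => k * f v) = fun v => k * (pd d)^[n] f v := by
  induction n generalizing f with
  | zero => simp
  | succ n ih =>
    rw [Function.iterate_succ_apply, Function.iterate_succ_apply, pd_const_mul hf k d]
    exact ih (pd_contDiff hf d)

lemma pd_iter_comp_smul {f : E3 → ℝ} (hf : ContDiff ℝ (⊤ : ℕ∞) f) (c : ℝ) (d : Fin 3) (n : ℕ) :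
    (pd d)^[n] (fun v => f (c • v)) = fun v => c ^ n * (pd d)^[n] f (c • v) := by
  induction n generalizing f with
  | zero => simp
  | succ n ih =>
    rw [Function.iterate_succ_apply, Function.iterate_succ_apply, pd_comp_smul hf c d]
    have h1 : (pd d)^[n] (fun v => c * pd d f (c • v))
        = fun v => c ^ n * (pd d)^[n] (fun w => c * pd d f w) (c • v) :=
      ih (contDiff_const.mul (pd_contDiff hf d))
    rw [h1, pd_iter_const_mul (pd_contDiff hf d) c d n]
    funext v
    ring

lemma pdMulti_const_mul {f : E3 → ℝ} (hf : ContDiff ℝ (⊤ : ℕ∞) f) (k : ℝ) (α : Fin 3 → ℕ) :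
    pdMulti α (fun v => k * f v) = fun v => k * pdMulti α f v := by
  unfold pdMulti
  rw [pd_iter_const_mul hf k 2 (α 2), pd_iter_const_mul (pd_iter_contDiff hf 2 (α 2)) k 1 (α 1),
    pd_iter_const_mul (pd_iter_contDiff (pd_iter_contDiff hf 2 (α 2)) 1 (α 1)) k 0 (α 0)]

lemma contDiff_comp_smul {f : E3 → ℝ} (hf : ContDiff ℝ (⊤ : ℕ∞) f) (c : ℝ) :
    ContDiff ℝ (⊤ : ℕ∞) (fun v : E3 => f (c • v)) := by
  have : (fun v : E3 => f (c • v)) = f ∘ ⇑(c • ContinuousLinearMap.id ℝ E3) := rfl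
  rw [this]
  exact hf.comp (c • ContinuousLinearMap.id ℝ E3).contDiff

lemma pd_iter_step {f : E3 → ℝ} (hf : ContDiff ℝ (⊤ : ℕ∞) f) (k c : ℝ) (d : Fin 3) (n : ℕ) :
    (pd d)^[n] (fun v => k * f (c • v)) = fun v => k * c ^ n * (pd d)^[n] f (c • v) := by
  rw [pd_iter_const_mul (contDiff_comp_smul hf c) k d n, pd_iter_comp_smul hf c d n]
  funext v; ring

lemma pdMulti_comp_smul {f : E3 → ℝ} (hf : ContDiff ℝ (⊤ : ℕ∞) f) (c : ℝ) (α : Fin 3 → ℕ) :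
    pdMulti α (fun v => f (c • v)) = fun v => c ^ msum α * pdMulti α f (c • v) := by
  unfold pdMulti
  rw [show (fun v : E3 => f (c • v)) = (fun v : E3 => (1 : ℝ) * f (c • v)) by
      funext v; ring,
    pd_iter_step hf 1 c 2 (α 2),
    pd_iter_step (pd_iter_contDiff hf 2 (α 2)) _ c 1 (α 1),
    pd_iter_step (pd_iter_contDiff (pd_iter_contDiff hf 2 (α 2)) 1 (α 1)) _ c 0 (α 0)]
  funext v
  simp only [msum, Fin.sum_univ_three]
  ring

lemma maxwellian_scale {T : ℝ} (hT : 0 < T) :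
    maxwellian 0 T = fun v => T ^ (-(3:ℝ)/2) * maxwellian 0 1 ((Real.sqrt T)⁻¹ • v) := by
  funext v
  unfold maxwellian
  have h2pi : (0:ℝ) ≤ 2 * π := by positivity
  rw [sub_zero, sub_zero, mul_one, Real.mul_rpow h2pi hT.le, norm_smul]
  have hnn : ‖(Real.sqrt T)⁻¹‖ = (Real.sqrt T)⁻¹ := by
    rw [Real.norm_eq_abs, abs_of_nonneg (by positivity)]
  rw [hnn, mul_pow, ← Real.sqrt_inv, Real.sq_sqrt (by positivity)]
  ring_nf

lemma hermiteH_scale {T : ℝ} (hT : 0 < T) (α : Fin 3 → ℕ) (v : E3) :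
    hermiteH 0 T α v = hermiteH 0 1 α ((Real.sqrt T)⁻¹ • v) := by
  have ht : (0:ℝ) < Real.sqrt T := Real.sqrt_pos.2 hT
  unfold hermiteH
  rw [maxwellian_scale hT]
  simp only [pdMulti_const_mul (contDiff_comp_smul (maxwellian_contDiff 0 1) _) _ α,
    pdMulti_comp_smul (maxwellian_contDiff 0 1) _ α]
  have h1 : T ^ ((msum α : ℝ)/2) = (Real.sqrt T) ^ (msum α) := by
    rw [Real.sqrt_eq_rpow, ← Real.rpow_natCast (T ^ ((1:ℝ)/2)), ← Real.rpow_mul hT.le]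
    ring_nf
  rw [h1, Real.one_rpow]
  have hM : maxwellian 0 1 ((Real.sqrt T)⁻¹ • v) ≠ 0 := (maxwellian_pos 0 one_pos _).ne'
  have hA : (T:ℝ) ^ (-(3:ℝ)/2) ≠ 0 := by positivity
  have h2 : (Real.sqrt T) ^ (msum α) * ((Real.sqrt T)⁻¹) ^ (msum α) = 1 := by
    rw [← mul_pow, mul_inv_cancel₀ ht.ne', one_pow]
  have h3 : T ^ (-(3:ℝ)/2) * (T ^ (-(3:ℝ)/2))⁻¹ = 1 := mul_inv_cancel₀ hA
  rw [mul_inv]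
  linear_combination ((-1:ℝ) ^ msum α * (maxwellian 0 1 ((Real.sqrt T)⁻¹ • v))⁻¹ *
    pdMulti α (maxwellian 0 1) ((Real.sqrt T)⁻¹ • v)) *
    ((Real.sqrt T) ^ msum α * ((Real.sqrt T)⁻¹) ^ msum α * h3 + h2)

lemma gammaIntegrand_scale (C : ℝ) (Sig : S2 → ℝ) {r T : ℝ} (hr : 0 < r) (hT : 0 < T)
    (kap j : Fin 3 → ℕ) (g : E3) (ς : S2) :
    gammaIntegrand (fun s ς => s ^ C * Sig ς) r T kap j g ς
      = T ^ (-(3:ℝ)/2) * (Real.sqrt ((1 + r) * T / (2 * r))) ^ C *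
        gammaIntegrand (fun s ς => s ^ C * Sig ς) 1 1 kap j
          ((Real.sqrt ((1 + r) * T / (2 * r)))⁻¹ • g) ς := by
  have h1r : (0:ℝ) < 1 + r := by linarith
  have hS : (0:ℝ) < (1 + r) * T / (2 * r) := by positivity
  set l := Real.sqrt ((1 + r) * T / (2 * r)) with hl_def
  have hl : 0 < l := Real.sqrt_pos.2 hS
  have key : (Real.sqrt T)⁻¹ * Real.sqrt (r / (1 + r))
      = Real.sqrt (1 / (1 + 1)) * l⁻¹ := by
    rw [hl_def, ← Real.sqrt_inv, ← Real.sqrt_inv,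
      ← Real.sqrt_mul (by positivity), ← Real.sqrt_mul (by positivity)]
    congr 1
    field_simp
    ring
  have hng : ‖l⁻¹ • g‖ = l⁻¹ * ‖g‖ := by
    rw [norm_smul, Real.norm_eq_abs, abs_of_nonneg (by positivity)]
  unfold gammaIntegrand
  simp only [hermiteH_scale hT, maxwellian_scale hT, smul_smul]
  have e1 : (Real.sqrt T)⁻¹ * (Real.sqrt (r / (1 + r)) * ‖g‖)
      = Real.sqrt (1 / (1 + 1)) * ‖l⁻¹ • g‖ := by
    rw [hng, ← mul_assoc, key]; ring
  have e3 : ‖g‖ ^ C = l ^ C * ‖l⁻¹ • g‖ ^ C := by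
    rw [hng, ← Real.mul_rpow hl.le (by positivity)]
    congr 1
    field_simp
  rw [e1, key, e3]
  ring
/-- Scaling of the `γ` coefficients for power-law kernels
`B(|g|, ς) = |g|^C Σ(ς)`:
`γ_κ^j(r, T̄) = ((1+r)/(2r))^{3/2} ((1+r)T̄/(2r))^{C/2} γ_κ^j(1, 1)`. -/
theorem gamma_scaling (C : ℝ) (Sig : S2 → ℝ) (hmeas : Measurable Sig)
    (hpos : ∀ ς, 0 ≤ Sig ς)
    (hInt : ∀ r T : ℝ, 0 < r → 0 < T → ∀ kap j : Fin 3 → ℕ,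
      Integrable
        (fun p : E3 × S2 => gammaIntegrand (fun s ς => s ^ C * Sig ς) r T kap j p.1 p.2)
        (volume.prod sphereMeasure))
    (r T : ℝ) (hr : 0 < r) (hT : 0 < T) (kap j : Fin 3 → ℕ) :
    gammaCoef (fun s ς => s ^ C * Sig ς) r T kap j =
      ((1 + r) / (2 * r)) ^ ((3 : ℝ) / 2) * ((1 + r) * T / (2 * r)) ^ (C / 2) *
        gammaCoef (fun s ς => s ^ C * Sig ς) 1 1 kap j := by
  have h1r : (0:ℝ) < 1 + r := by linarith
  have hS : (0:ℝ) < (1 + r) * T / (2 * r) := by positivity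
  set l := Real.sqrt ((1 + r) * T / (2 * r)) with hl_def
  have hl : 0 < l := Real.sqrt_pos.2 hS
  unfold gammaCoef
  simp only [gammaIntegrand_scale C Sig hr hT kap j]
  simp only [MeasureTheory.integral_const_mul]
  rw [MeasureTheory.Measure.integral_comp_inv_smul volume
    (fun w : E3 => ∫ ς : S2, gammaIntegrand (fun s ς => s ^ C * Sig ς) 1 1 kap j w ς
      ∂sphereMeasure) l]
  have hrank : Module.finrank ℝ E3 = 3 := by simp [finrank_euclideanSpace]
  rw [hrank, smul_eq_mul, abs_of_nonneg (by positivity : (0:ℝ) ≤ l ^ 3)]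
  have h3 : l ^ (3:ℕ) = ((1 + r) * T / (2 * r)) ^ ((3:ℝ)/2) := by
    rw [hl_def, Real.sqrt_eq_rpow, ← Real.rpow_natCast (((1 + r) * T / (2 * r)) ^ ((1:ℝ)/2)),
      ← Real.rpow_mul hS.le]
    norm_num
  have hc1 : T ^ (-(3:ℝ)/2) * l ^ (3:ℕ) = ((1 + r) / (2 * r)) ^ ((3:ℝ)/2) := by
    rw [h3, show (1 + r) / (2 * r) = ((1 + r) * T / (2 * r)) / T from by field_simp,
      Real.div_rpow hS.le hT.le, show (-(3:ℝ)/2) = -((3:ℝ)/2) from by norm_num,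
      Real.rpow_neg hT.le, div_eq_mul_inv]
    ring
  have hc2 : l ^ C = ((1 + r) * T / (2 * r)) ^ (C/2) := by
    rw [hl_def, Real.sqrt_eq_rpow, ← Real.rpow_mul hS.le]
    ring_nf
  rw [show T ^ (-(3:ℝ)/2) * l ^ C * (l ^ 3 *
        ∫ g : E3, ∫ ς : S2, gammaIntegrand (fun s ς => s ^ C * Sig ς) 1 1 kap j g ς ∂sphereMeasure)
      = (T ^ (-(3:ℝ)/2) * l ^ (3:ℕ)) * l ^ C *
        ∫ g : E3, ∫ ς : S2, gammaIntegrand (fun s ς => s ^ C * Sig ς) 1 1 kap j g ς ∂sphereMeasure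
      from by push_cast; ring, hc1, hc2]
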